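/- Let V be a finite-dimensional complex vector space of dimension 2n equipped with a nondegenerate symmetric bilinear form B, and let L₁, L₂ ⊆ V be maximal isotropic subspaces (i.e., B vanishes identically on each Lᵢ and dim Lᵢ = n). If n − dim(L₁ ∩ L₂) is even, then there exists a maximal isotropic subspace L' ⊆ V with L' ∩ L₁ = 0 and L' ∩ L₂ = 0. -/

import Mathlib

/-!
Let `K = L₁ ⊓ L₂`, of dimension `k`, and `n - k = 2p`. Since `L₂` is its own orthogonal, `B`
identifies `L₂ / K` with the dual of `L₁ / K`; this gives families `e` in `L₁` and `f` in `L₂`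
of size `2p` with `B (e a) (f b) = δ a b`. Nondegeneracy then gives an isotropic family `h`
dual to a basis `κ` of `K` and orthogonal to `e` and `f`. The subspace `L'` is spanned by `h`
and the graph of a map `span e → span f` which, read through `B`, is a nondegenerate
alternating form; this is where `2p` even is needed. Testing against `κ` and suitable
combinations of `e` (resp. of `f`) shows that `L'` meets `L₁` (resp. `L₂`) trivially.
-/

open Module Submodule

namespace LinearMap

variable {K M N ι : Type*} [Field K] [AddCommGroup M] [Module K M] [AddCommGroup N] [Module K N]
  [DecidableEq ι]

def IsBiorthogonal (B : M →ₗ[K] N →ₗ[K] K) (e : ι → M) (f : ι → N) : Prop :=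
  ∀ i j, B (e i) (f j) = if i = j then 1 else 0

namespace IsBiorthogonal

variable {B : M →ₗ[K] N →ₗ[K] K} {e : ι → M} {f : ι → N}

theorem apply_sum_smul [Fintype ι] (h : B.IsBiorthogonal e f) (c : ι → K) (i : ι) :
    B (e i) (∑ j, c j • f j) = c i := by
  simp [h i, mul_ite]

theorem linearIndependent [Fintype ι] (h : B.IsBiorthogonal e f) : LinearIndependent K f :=
  Fintype.linearIndependent_iff.mpr fun c hc i => by
    rw [← h.apply_sum_smul c i, hc, map_zero]

theorem span_inf_eq_bot [Fintype ι] (h : B.IsBiorthogonal e f) {L : Submodule K N}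
    (he : ∀ i, ∀ x ∈ L, B (e i) x = 0) : span K (Set.range f) ⊓ L = ⊥ := by
  refine eq_bot_iff.mpr fun x ⟨hxf, hxL⟩ => ?_
  obtain ⟨c, rfl⟩ := (mem_span_range_iff_exists_fun K).mp hxf
  have hc : c = 0 := funext fun i => by rw [← h.apply_sum_smul c i, he i _ hxL, Pi.zero_apply]
  simp [hc]

theorem sum_elim {κ : Type*} [DecidableEq κ] {e' : κ → M} {f' : κ → N}
    (h : B.IsBiorthogonal e f) (h' : B.IsBiorthogonal e' f')
    (hef' : ∀ i j, B (e i) (f' j) = 0) (he'f : ∀ i j, B (e' i) (f j) = 0) :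
    B.IsBiorthogonal (Sum.elim e e') (Sum.elim f f') := by
  rintro (i | i) (j | j)
  · simpa using h i j
  · simpa using hef' i j
  · simpa using he'f i j
  · simpa using h' i j

end IsBiorthogonal

theorem exists_isBiorthogonal [Finite ι] (B : M →ₗ[K] N →ₗ[K] K) {e : ι → M}
    (he : LinearIndependent K (B ∘ e)) : ∃ f : ι → N, B.IsBiorthogonal e f := by
  have hspan := span_flip_eq_top_iff_linearIndependent.mpr
    (he.map' (ltoFun K N K K) (ker_eq_bot.mpr fun _ _ h => LinearMap.ext (congrFun h)))
  have hsurj : Function.Surjective (LinearMap.pi fun i => B (e i)) := by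
    rw [← range_eq_top, ← hspan, ← (LinearMap.range _).span_eq]
    rfl
  choose f hf using fun j => hsurj (Pi.single j 1)
  refine ⟨f, fun i j => ?_⟩
  simpa [Pi.single_apply] using congrFun (hf j) i

end LinearMap

namespace LinearMap.BilinForm

variable {K V ι : Type*} [Field K] [AddCommGroup V] [Module K V] {B : LinearMap.BilinForm K V}

theorem isotropic_span_range [Fintype ι] {g : ι → V} (hg : ∀ i j, B (g i) (g j) = 0) :
    ∀ x ∈ span K (Set.range g), ∀ y ∈ span K (Set.range g), B x y = 0 := by
  intro x hx y hy
  obtain ⟨c, rfl⟩ := (mem_span_range_iff_exists_fun K).mp hx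
  obtain ⟨d, rfl⟩ := (mem_span_range_iff_exists_fun K).mp hy
  simp [hg]

theorem orthogonal_eq_self_of_isotropic [FiniteDimensional K V] (hB : B.Nondegenerate)
    {L : Submodule K V} (hL : ∀ x ∈ L, ∀ y ∈ L, B x y = 0)
    (hdim : finrank K V = 2 * finrank K L) : B.orthogonal L = L := by
  have hle : L ≤ B.orthogonal L := fun x hx => mem_orthogonal_iff.mpr fun y hy => hL y hy x hx
  refine (eq_of_le_of_finrank_le hle ?_).symm
  rw [finrank_orthogonal hB, hdim]
  omega

theorem exists_isBiorthogonal_of_linearIndependent [Finite ι] [DecidableEq ι]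
    (hB : B.SeparatingLeft) {e : ι → V} (he : LinearIndependent K e) :
    ∃ f : ι → V, B.IsBiorthogonal e f :=
  B.exists_isBiorthogonal (he.map' B (separatingLeft_iff_ker_eq_bot.mp hB))

theorem exists_isBiorthogonal_of_orthogonal_eq_self [FiniteDimensional K V] [Fintype ι]
    [DecidableEq ι] (hB : B.IsRefl) {L₁ L₂ : Submodule K V} (hL₂ : B.orthogonal L₂ = L₂)
    (hι : Fintype.card ι + finrank K ↥(L₁ ⊓ L₂) = finrank K L₁) :
    ∃ e f : ι → V, (∀ i, e i ∈ L₁) ∧ (∀ i, f i ∈ L₂) ∧ B.IsBiorthogonal e f := by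
  let φ : L₁ →ₗ[K] L₂ →ₗ[K] K := B.compl₁₂ L₁.subtype L₂.subtype
  have hker : ker φ = (L₁ ⊓ L₂).comap L₁.subtype := by
    ext x
    conv_rhs => rw [mem_comap, subtype_apply, mem_inf, ← hL₂, mem_orthogonal_iff]
    simp [φ, LinearMap.ext_iff, x.2, hB.eq_iff]
  obtain ⟨C, hC⟩ := (ker φ).exists_isCompl
  have hcard : Fintype.card ι = finrank K C := by
    have := finrank_add_eq_of_isCompl hC
    rw [hker, (comapSubtypeEquivOfLe inf_le_left).finrank_eq] at this
    omega
  let b := (finBasis K C).reindex (Fintype.equivFinOfCardEq hcard).symm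
  have hφb : LinearIndependent K (φ ∘ C.subtype ∘ b) :=
    b.linearIndependent.map' (φ.domRestrict C)
      (ker_eq_bot.mpr (injective_domRestrict_iff.mpr hC.disjoint.symm))
  obtain ⟨f, hf⟩ := φ.exists_isBiorthogonal hφb
  exact ⟨fun i => b i, fun i => f i, fun i => (b i : L₁).2, fun i => (f i).2, hf⟩

theorem exists_orthogonal_of_isBiorthogonal [Fintype ι] [DecidableEq ι] (hB : B.IsSymm)
    {e f : ι → V} (he : ∀ i j, B (e i) (e j) = 0) (hf : ∀ i j, B (f i) (f j) = 0)
    (hef : B.IsBiorthogonal e f) (v : V) :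
    ∃ w, (∀ i, B (e i) w = 0) ∧ (∀ i, B (f i) w = 0) ∧
      ∀ u, (∀ i, B u (e i) = 0) → (∀ i, B u (f i) = 0) → B u w = B u v := by
  have hfe : ∀ i j, B (f i) (e j) = if j = i then 1 else 0 := fun i j => (hB.eq _ _).trans (hef j i)
  refine ⟨v - ∑ i, B (f i) v • e i - ∑ i, B (e i) v • f i, fun j => ?_, fun j => ?_,
    fun u hue huf => ?_⟩
  · simp [he, hef j, mul_ite]
  · simp [hf, hfe j, mul_ite]
  · simp [hue, huf]

theorem exists_isotropic_of_isBiorthogonal [Fintype ι] [DecidableEq ι] [NeZero (2 : K)]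
    (hB : B.IsSymm) {e f : ι → V} (he : ∀ i j, B (e i) (e j) = 0) (hef : B.IsBiorthogonal e f) :
    ∃ f' : ι → V, B.IsBiorthogonal e f' ∧ (∀ i j, B (f' i) (f' j) = 0) ∧
      ∀ u, (∀ i, B u (e i) = 0) → ∀ j, B u (f' j) = B u (f j) := by
  set f' : ι → V := fun j => f j - (2⁻¹ : K) • ∑ s, B (f j) (f s) • e s
  have hf' : ∀ u j, B u (f' j) = B u (f j) - 2⁻¹ * ∑ s, B (f j) (f s) * B u (e s) := by
    simp [f', Finset.mul_sum]
  have hef' : B.IsBiorthogonal e f' := fun i j => by simp [hf', he, hef i j]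
  have hf'e : ∀ i s, B (f' i) (e s) = if s = i then 1 else 0 := fun i s => by
    rw [hB.eq, hef' s i]
  have hf'f : ∀ i j, B (f' i) (f j) = 2⁻¹ * B (f i) (f j) := fun i j => by
    have hfe : ∀ t, B (f j) (e t) = if t = j then 1 else 0 := fun t => by rw [hB.eq, hef t j]
    simp [hB.eq (f' i), hf', hfe, hB.eq (f j) (f i)]
    field_simp
    ring
  refine ⟨f', hef', fun i j => ?_, fun u hu j => by simp [hf', hu]⟩
  simp [hf', hf'f, hf'e, hB.eq (f j) (f i)]

theorem exists_isotropic_isBiorthogonal_orthogonal [Fintype ι] [DecidableEq ι] [NeZero (2 : K)]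
    {σ : Type*} [Fintype σ] [DecidableEq σ] (hB : B.IsSymm) (hsep : B.SeparatingLeft)
    {κ : ι → V} (hκ : LinearIndependent K κ) (hκκ : ∀ i j, B (κ i) (κ j) = 0)
    {e f : σ → V} (he : ∀ a b, B (e a) (e b) = 0) (hf : ∀ a b, B (f a) (f b) = 0)
    (hef : B.IsBiorthogonal e f) (hκe : ∀ i a, B (κ i) (e a) = 0)
    (hκf : ∀ i a, B (κ i) (f a) = 0) :
    ∃ h : ι → V, B.IsBiorthogonal κ h ∧ (∀ i j, B (h i) (h j) = 0) ∧
      (∀ a j, B (e a) (h j) = 0) ∧ ∀ a j, B (f a) (h j) = 0 := by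
  obtain ⟨h₀, hκh₀⟩ := exists_isBiorthogonal_of_linearIndependent hsep hκ
  choose h₁ heh₁ hfh₁ hh₁ using fun j => exists_orthogonal_of_isBiorthogonal hB he hf hef (h₀ j)
  have hκh₁ : B.IsBiorthogonal κ h₁ := fun i j => by
    rw [hh₁ j (κ i) (hκe i) (hκf i), hκh₀ i j]
  obtain ⟨h, hκh, hh, hh₁h⟩ := exists_isotropic_of_isBiorthogonal hB hκκ hκh₁
  have hκ_orth : ∀ (u : σ → V), (∀ i a, B (κ i) (u a) = 0) → ∀ a i, B (u a) (κ i) = 0 :=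
    fun u hu a i => by rw [hB.eq, hu]
  refine ⟨h, hκh, hh, fun a j => ?_, fun a j => ?_⟩
  · rw [hh₁h _ (hκ_orth e hκe a), heh₁]
  · rw [hh₁h _ (hκ_orth f hκf a), hfh₁]

variable {σ : Type*}

/-- The graph of `e (inl s) ↦ f (inr s)`, `e (inr s) ↦ -f (inl s)`: through `B` this map is a
nondegenerate alternating form, so the graph is isotropic and meets `span e` trivially. -/
def skewGraph (e f : σ ⊕ σ → V) : σ ⊕ σ → V :=
  Sum.elim (fun s => e (.inl s) + f (.inr s)) (fun s => e (.inr s) - f (.inl s))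

section skewGraph

variable {e f : σ ⊕ σ → V}

theorem apply_skewGraph_eq_zero {u : V} (hue : ∀ a, B u (e a) = 0) (huf : ∀ a, B u (f a) = 0)
    (a : σ ⊕ σ) : B u (skewGraph e f a) = 0 := by
  rcases a with s | s <;> simp [skewGraph, hue, huf]

variable [DecidableEq σ]

theorem skewGraph_isotropic (hB : B.IsSymm) (he : ∀ a b, B (e a) (e b) = 0)
    (hf : ∀ a b, B (f a) (f b) = 0) (hef : B.IsBiorthogonal e f) (a b : σ ⊕ σ) :
    B (skewGraph e f a) (skewGraph e f b) = 0 := by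
  unfold IsBiorthogonal at hef
  rcases a with s | s <;> rcases b with r | r <;>
    simp [skewGraph, he, hf, hef, hB.eq (f _) (e _), eq_comm]

theorem isBiorthogonal_skewGraph_right (hB : B.IsSymm) (hf : ∀ a b, B (f a) (f b) = 0)
    (hef : B.IsBiorthogonal e f) : B.IsBiorthogonal f (skewGraph e f) := by
  unfold IsBiorthogonal at hef ⊢
  rintro a (r | r) <;> simp [skewGraph, hf, hef, hB.eq (f _) (e _), eq_comm]

theorem isBiorthogonal_skewGraph_left (he : ∀ a b, B (e a) (e b) = 0)
    (hef : B.IsBiorthogonal e f) :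
    B.IsBiorthogonal (Sum.elim (fun s => e (.inr s)) (fun s => -e (.inl s))) (skewGraph e f) := by
  unfold IsBiorthogonal at hef ⊢
  rintro (s | s) (r | r) <;> simp [skewGraph, he, hef]

end skewGraph

theorem exists_isotropic_inf_eq_bot [Fintype ι] [DecidableEq ι] [Fintype σ] [DecidableEq σ]
    (hB : B.IsSymm) {L₁ L₂ : Submodule K V} (hL₁ : ∀ x ∈ L₁, ∀ y ∈ L₁, B x y = 0)
    (hL₂ : ∀ x ∈ L₂, ∀ y ∈ L₂, B x y = 0) {κ h : ι → V} {e f : σ ⊕ σ → V}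
    (hκ₁ : ∀ i, κ i ∈ L₁) (hκ₂ : ∀ i, κ i ∈ L₂) (he : ∀ a, e a ∈ L₁) (hf : ∀ a, f a ∈ L₂)
    (hef : B.IsBiorthogonal e f) (hκh : B.IsBiorthogonal κ h) (hh : ∀ i j, B (h i) (h j) = 0)
    (heh : ∀ a j, B (e a) (h j) = 0) (hfh : ∀ a j, B (f a) (h j) = 0) :
    ∃ L' : Submodule K V, (∀ x ∈ L', ∀ y ∈ L', B x y = 0) ∧
      finrank K L' = Fintype.card ι + 2 * Fintype.card σ ∧ L' ⊓ L₁ = ⊥ ∧ L' ⊓ L₂ = ⊥ := by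
  have hee : ∀ a b, B (e a) (e b) = 0 := fun a b => hL₁ _ (he a) _ (he b)
  have hff : ∀ a b, B (f a) (f b) = 0 := fun a b => hL₂ _ (hf a) _ (hf b)
  have hhg : ∀ j b, B (h j) (skewGraph e f b) = 0 := fun j =>
    apply_skewGraph_eq_zero (fun a => by rw [hB.eq, heh]) (fun a => by rw [hB.eq, hfh])
  have hκg : ∀ i b, B (κ i) (skewGraph e f b) = 0 := fun i =>
    apply_skewGraph_eq_zero (fun a => hL₁ _ (hκ₁ i) _ (he a)) (fun a => hL₂ _ (hκ₂ i) _ (hf a))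
  set G := Sum.elim h (skewGraph e f)
  have hG : ∀ a b, B (G a) (G b) = 0 := by
    rintro (i | a) (j | b)
    · exact hh i j
    · exact hhg i b
    · rw [hB.eq]; exact hhg j a
    · exact skewGraph_isotropic hB hee hff hef a b
  have hG₁ : B.IsBiorthogonal (Sum.elim κ (Sum.elim (fun s => e (.inr s)) (fun s => -e (.inl s))))
      G :=
    hκh.sum_elim (isBiorthogonal_skewGraph_left hee hef) hκg (by rintro (s | s) j <;> simp [heh])
  have hG₂ : B.IsBiorthogonal (Sum.elim κ f) G :=
    hκh.sum_elim (isBiorthogonal_skewGraph_right hB hff hef) hκg hfh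
  refine ⟨span K (Set.range G), isotropic_span_range hG, ?_, hG₁.span_inf_eq_bot ?_,
    hG₂.span_inf_eq_bot ?_⟩
  · rw [finrank_span_eq_card hG₁.linearIndependent]
    simp [two_mul]
  · rintro (i | s | s) x hx <;> simp [hL₁ _ (hκ₁ _) _ hx, hL₁ _ (he _) _ hx]
  · rintro (i | a) x hx <;> simp [hL₂ _ (hκ₂ _) _ hx, hL₂ _ (hf _) _ hx]

end LinearMap.BilinForm

open LinearMap.BilinForm in
theorem stmt_8 {V : Type*} [AddCommGroup V] [Module ℂ V] [FiniteDimensional ℂ V] (n : ℕ)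
    (hdim : Module.finrank ℂ V = 2 * n)
    (B : V →ₗ[ℂ] V →ₗ[ℂ] ℂ)
    (hsymm : ∀ x y, B x y = B y x)
    (hnd : ∀ v, (∀ w, B v w = 0) → v = 0)
    (L₁ L₂ : Submodule ℂ V)
    (h₁iso : ∀ x ∈ L₁, ∀ y ∈ L₁, B x y = 0) (h₁dim : Module.finrank ℂ L₁ = n)
    (h₂iso : ∀ x ∈ L₂, ∀ y ∈ L₂, B x y = 0) (h₂dim : Module.finrank ℂ L₂ = n)
    (heven : Even (n - Module.finrank ℂ ↥(L₁ ⊓ L₂))) :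
    ∃ L' : Submodule ℂ V,
      (∀ x ∈ L', ∀ y ∈ L', B x y = 0) ∧ Module.finrank ℂ L' = n ∧
      L' ⊓ L₁ = ⊥ ∧ L' ⊓ L₂ = ⊥ := by
  obtain ⟨p, hp⟩ := heven
  have hk : finrank ℂ ↥(L₁ ⊓ L₂) ≤ n := h₁dim ▸ Submodule.finrank_mono inf_le_left
  have hB : LinearMap.BilinForm.IsSymm B := ⟨hsymm⟩
  have hL₂ : orthogonal B L₂ = L₂ := orthogonal_eq_self_of_isotropic
    (hB.isRefl.nondegenerate_iff_separatingLeft.mpr hnd) h₂iso (by omega)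
  obtain ⟨e, f, he, hf, hef⟩ := exists_isBiorthogonal_of_orthogonal_eq_self
    (ι := Fin p ⊕ Fin p) (L₁ := L₁) hB.isRefl hL₂ (by simp; omega)
  let b := finBasis ℂ ↥(L₁ ⊓ L₂)
  have hκ : LinearIndependent ℂ (fun i => (b i : V)) := b.linearIndependent.map' _ (ker_subtype _)
  have hκ₁ : ∀ i, (b i : V) ∈ L₁ := fun i => (b i).2.1
  have hκ₂ : ∀ i, (b i : V) ∈ L₂ := fun i => (b i).2.2
  obtain ⟨h, hκh, hh, heh, hfh⟩ := exists_isotropic_isBiorthogonal_orthogonal hB hnd hκ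
    (fun i j => h₁iso _ (hκ₁ i) _ (hκ₁ j)) (fun a b => h₁iso _ (he a) _ (he b))
    (fun a b => h₂iso _ (hf a) _ (hf b)) hef (fun i a => h₁iso _ (hκ₁ i) _ (he a))
    (fun i a => h₂iso _ (hκ₂ i) _ (hf a))
  obtain ⟨L', hL', hdimL', hL'₁, hL'₂⟩ :=
    exists_isotropic_inf_eq_bot hB h₁iso h₂iso hκ₁ hκ₂ he hf hef hκh hh heh hfh
  exact ⟨L', hL', by simp [hdimL']; omega, hL'₁, hL'₂⟩
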